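/- arXiv:1902.10983 — 3 statements merged into one kernel-verified Lean document; each statement's English description precedes it below -/
import Mathlib

section
/- For every n ≥ 1, the word (x₁x₂)ⁿ (n alternating repetitions of two distinct letters x₁ and x₂) has locality number exactly n. -/
noncomputable section

attribute [local instance] Classical.propDecidable

variable {X : Type*} [DecidableEq X]

/-- Number of maximal blocks of `true`s in a list of booleans, where the first
argument is the preceding symbol. -/
def blocksAux : Bool → List Bool → ℕ
  | _, [] => 0
  | prev, b :: rest => (if b = true ∧ prev = false then 1 else 0) + blocksAux b rest

/-- Number of maximal contiguous blocks of positions of `w` whose letter lies in `S`. -/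
def blockCount (w : List X) (S : List X) : ℕ :=
  blocksAux false (w.map (fun x => decide (x ∈ S)))

/-- `σ` is a marking sequence for `w`: an enumeration, without repetition,
of the alphabet of `w`. -/
def IsMarkingSeq (w σ : List X) : Prop := σ.Nodup ∧ σ.toFinset = w.toFinset

/-- The marking number of the marking sequence `σ` on `w`: the maximum, over all
stages `i`, of the number of maximal contiguous marked blocks after marking the
first `i` letters of `σ`. -/
def markingNumber (w σ : List X) : ℕ :=
  Finset.sup (Finset.range (σ.length + 1)) (fun i => blockCount w (σ.take i))

/-- The locality number of `w`: the minimum marking number over all marking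
sequences for `w`. -/
def locality (w : List X) : ℕ :=
  sInf {n | ∃ σ, IsMarkingSeq w σ ∧ markingNumber w σ = n}

/-! Every marking sequence starts by marking a single letter of `(x₁x₂)ⁿ`, which already
creates `n` blocks; conversely marking `x₁` and then `x₂` never exceeds `n` blocks, since
once both letters are marked the whole word is a single block. -/

open List

lemma blocksAux_eq_zero_of_forall_eq_false (p : Bool) {l : List Bool}
    (h : ∀ b ∈ l, b = false) : blocksAux p l = 0 := by
  induction l generalizing p with
  | nil => rfl
  | cons b l ih =>
    simp only [mem_cons, forall_eq_or_imp] at h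
    simp [blocksAux, h.1, ih _ h.2]

lemma blocksAux_true_eq_zero_of_forall_eq_true {l : List Bool}
    (h : ∀ b ∈ l, b = true) : blocksAux true l = 0 := by
  induction l with
  | nil => rfl
  | cons b l ih =>
    simp only [mem_cons, forall_eq_or_imp] at h
    simp [blocksAux, h.1, ih h.2]

lemma blocksAux_le_one_of_forall_eq_true (p : Bool) {l : List Bool}
    (h : ∀ b ∈ l, b = true) : blocksAux p l ≤ 1 := by
  cases l with
  | nil => simp [blocksAux]
  | cons b l =>
    simp only [mem_cons, forall_eq_or_imp] at h
    simp only [blocksAux, h.1, blocksAux_true_eq_zero_of_forall_eq_true h.2]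
    split <;> omega

lemma blocksAux_flatten_replicate_true_false (n : ℕ) :
    blocksAux false (replicate n [true, false]).flatten = n := by
  induction n with
  | zero => rfl
  | succ n ih => simp [replicate_succ, blocksAux, ih, add_comm]

lemma blocksAux_flatten_replicate_false_true (p : Bool) (n : ℕ) :
    blocksAux p (replicate n [false, true]).flatten = n := by
  induction n generalizing p with
  | zero => rfl
  | succ n ih => simp [replicate_succ, blocksAux, ih, add_comm]

lemma blockCount_nil_right (w : List X) : blockCount w [] = 0 :=
  blocksAux_eq_zero_of_forall_eq_false _ (by simp)

lemma blockCount_le_one_of_forall_mem {w S : List X} (h : ∀ x ∈ w, x ∈ S) :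
    blockCount w S ≤ 1 :=
  blocksAux_le_one_of_forall_eq_true _ (by simpa using h)

lemma blockCount_alternating_singleton {x₁ x₂ a : X} (hx : x₁ ≠ x₂) (ha : a = x₁ ∨ a = x₂)
    (n : ℕ) : blockCount (replicate n [x₁, x₂]).flatten [a] = n := by
  rcases ha with rfl | rfl <;>
    simp [blockCount, map_flatten, hx, hx.symm, blocksAux_flatten_replicate_true_false,
      blocksAux_flatten_replicate_false_true]

lemma markingNumber_le_iff {w σ : List X} {m : ℕ} :
    markingNumber w σ ≤ m ↔ ∀ i ≤ σ.length, blockCount w (σ.take i) ≤ m := by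
  simp [markingNumber]

lemma blockCount_take_le_markingNumber {w σ : List X} {i : ℕ} (hi : i ≤ σ.length) :
    blockCount w (σ.take i) ≤ markingNumber w σ :=
  markingNumber_le_iff.1 le_rfl i hi

lemma isMarkingSeq_dedup (w : List X) : IsMarkingSeq w w.dedup :=
  ⟨nodup_dedup w, by ext; simp⟩

lemma locality_le_markingNumber {w σ : List X} (hσ : IsMarkingSeq w σ) :
    locality w ≤ markingNumber w σ :=
  Nat.sInf_le ⟨σ, hσ, rfl⟩

lemma le_locality {w : List X} {m : ℕ} (h : ∀ σ, IsMarkingSeq w σ → m ≤ markingNumber w σ) :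
    m ≤ locality w := by
  obtain ⟨σ, hσ, hσm⟩ : locality w ∈ {n | ∃ σ, IsMarkingSeq w σ ∧ markingNumber w σ = n} :=
    Nat.sInf_mem ⟨_, w.dedup, isMarkingSeq_dedup w, rfl⟩
  exact hσm ▸ h σ hσ

lemma isMarkingSeq_alternating {x₁ x₂ : X} (hx : x₁ ≠ x₂) {n : ℕ} (hn : n ≠ 0) :
    IsMarkingSeq (replicate n [x₁, x₂]).flatten [x₁, x₂] :=
  ⟨by simp [hx], by ext; simp [hn]⟩

lemma le_markingNumber_alternating {x₁ x₂ : X} (hx : x₁ ≠ x₂) {n : ℕ} {σ : List X}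
    (hσ : IsMarkingSeq (replicate n [x₁, x₂]).flatten σ) :
    n ≤ markingNumber (replicate n [x₁, x₂]).flatten σ := by
  rcases σ with _ | ⟨a, σ⟩
  · obtain rfl : n = 0 := by simpa [eq_comm (a := ∅)] using hσ.2
    exact Nat.zero_le _
  · have ha : a ∈ (a :: σ).toFinset := by simp
    rw [hσ.2] at ha
    simp only [mem_toFinset, mem_flatten, mem_replicate] at ha
    obtain ⟨_, ⟨-, rfl⟩, ha⟩ := ha
    calc n = blockCount (replicate n [x₁, x₂]).flatten ((a :: σ).take 1) :=
          (blockCount_alternating_singleton hx (by simpa using ha) n).symm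
      _ ≤ _ := blockCount_take_le_markingNumber (by simp)

lemma markingNumber_alternating_le {x₁ x₂ : X} (hx : x₁ ≠ x₂) {n : ℕ} (hn : n ≠ 0) :
    markingNumber (replicate n [x₁, x₂]).flatten [x₁, x₂] ≤ n := by
  refine markingNumber_le_iff.2 fun i hi => ?_
  obtain rfl | rfl | rfl : i = 0 ∨ i = 1 ∨ i = 2 := by simp only [length_cons, length_nil, zero_add, Nat.reduceAdd] at hi; omega
  · simp [blockCount_nil_right]
  · exact (blockCount_alternating_singleton hx (Or.inl rfl) n).le
  · exact (blockCount_le_one_of_forall_mem (by simp)).trans (Nat.one_le_iff_ne_zero.2 hn)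

theorem locality_alternating_general (x₁ x₂ : X) (hx : x₁ ≠ x₂) (n : ℕ) :
    locality (List.flatten (List.replicate n [x₁, x₂])) = n := by
  rcases eq_or_ne n 0 with rfl | hn
  · exact Nat.eq_zero_of_le_zero (locality_le_markingNumber (isMarkingSeq_dedup []))
  exact le_antisymm
    ((locality_le_markingNumber (isMarkingSeq_alternating hx hn)).trans
      (markingNumber_alternating_le hx hn))
    (le_locality fun _ => le_markingNumber_alternating hx)

/-- For every `n ≥ 1`, the word `(x₁x₂)ⁿ` over two distinct letters has locality
number exactly `n`. -/
theorem locality_alternating (x₁ x₂ : X) (hx : x₁ ≠ x₂) (n : ℕ) (hn : 1 ≤ n) :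
    locality (List.flatten (List.replicate n [x₁, x₂])) = n :=
  locality_alternating_general x₁ x₂ hx n
end
end

section
/- For any word w over alphabet X and any marking sequence σ, the marking numbers of σ and its reversal σ^R differ by at most 1: |π_σ(w) − π_{σ^R}(w)| ≤ 1. -/
noncomputable section

attribute [local instance] Classical.propDecidable

variable {X : Type*} [DecidableEq X]

/-!
At stage `i` of `σ` the marked letters of `w` are exactly the letters left unmarked at stage
`|X| - i` of `σ^R`. In the 0/1 word recording which positions are marked, blocks of `1`s and
blocks of `0`s alternate, so complementing it changes the number of blocks of `1`s by at most
one. Hence each marking number is at most the other plus one.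
-/

lemma blocksAux_sub_blocksAux_map_not (l : List Bool) (prev : Bool) :
    (blocksAux prev l : ℤ) - blocksAux (!prev) (l.map not) =
      (l.getLastD prev).toNat - prev.toNat := by
  induction l generalizing prev with
  | nil => simp [blocksAux]
  | cons b rest ih =>
    simp only [List.map_cons, blocksAux, List.getLastD_cons]
    have := ih b
    cases b <;> cases prev <;> simp_all <;> omega

lemma blocksAux_true_le_blocksAux_false (l : List Bool) :
    blocksAux true l ≤ blocksAux false l := by
  cases l with
  | nil => rfl
  | cons b rest => cases b <;> simp [blocksAux]

lemma blocksAux_false_le_blocksAux_false_map_not_add_one (l : List Bool) :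
    blocksAux false l ≤ blocksAux false (l.map not) + 1 := by
  have hdiff := blocksAux_sub_blocksAux_map_not l false
  have := blocksAux_true_le_blocksAux_false (l.map not)
  have := Bool.toNat_le (l.getLastD false)
  simp only [Bool.not_false] at hdiff
  omega

lemma blockCount_le_blockCount_add_one_of_compl {w S T : List X}
    (h : ∀ x ∈ w, x ∈ T ↔ x ∉ S) :
    blockCount w S ≤ blockCount w T + 1 := by
  have hmap : w.map (fun x => decide (x ∈ T)) = (w.map fun x => decide (x ∈ S)).map not := by
    rw [List.map_map]
    exact List.map_congr_left fun x hx => by simp [h x hx]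
  unfold blockCount
  rw [hmap]
  exact blocksAux_false_le_blocksAux_false_map_not_add_one _

lemma mem_take_reverse_iff_not_mem_take {α : Type*} {σ : List α} (hσ : σ.Nodup) {x : α}
    (hx : x ∈ σ) {i : ℕ} (hi : i ≤ σ.length) :
    x ∈ σ.reverse.take (σ.length - i) ↔ x ∉ σ.take i := by
  rw [List.take_reverse, List.mem_reverse, Nat.sub_sub_self hi]
  constructor
  · exact fun hdrop htake => List.disjoint_take_drop hσ le_rfl htake hdrop
  · intro htake
    rw [← List.take_append_drop i σ, List.mem_append] at hx
    exact hx.resolve_left htake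

lemma markingNumber_le_markingNumber_reverse_add_one {w σ : List X} (hσ : σ.Nodup)
    (hw : w ⊆ σ) :
    markingNumber w σ ≤ markingNumber w σ.reverse + 1 := by
  refine Finset.sup_le fun i hi => ?_
  have hi : i ≤ σ.length := Nat.lt_succ_iff.mp (Finset.mem_range.mp hi)
  calc blockCount w (σ.take i)
      ≤ blockCount w (σ.reverse.take (σ.length - i)) + 1 :=
        blockCount_le_blockCount_add_one_of_compl fun x hx =>
          mem_take_reverse_iff_not_mem_take hσ (hw hx) hi
    _ ≤ markingNumber w σ.reverse + 1 := by
        gcongr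
        refine Finset.le_sup (f := fun j => blockCount w (σ.reverse.take j)) ?_
        rw [Finset.mem_range, List.length_reverse]
        omega

/-- The marking numbers of a marking sequence `σ` and of its reversal differ
by at most `1`. -/
theorem markingNumber_reverse (w σ : List X) (h : IsMarkingSeq w σ) :
    |(markingNumber w σ : ℤ) - (markingNumber w σ.reverse : ℤ)| ≤ 1 := by
  obtain ⟨hσ, hfin⟩ := h
  have hw : w ⊆ σ := fun x hx => by
    rw [← List.mem_toFinset, hfin, List.mem_toFinset]
    exact hx
  have h₁ := markingNumber_le_markingNumber_reverse_add_one hσ hw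
  have h₂ := markingNumber_le_markingNumber_reverse_add_one (List.nodup_reverse.mpr hσ)
    (List.subset_reverse.mpr hw)
  rw [List.reverse_reverse] at h₂
  rw [abs_sub_le_iff]
  omega
end
end

section
/- For every condensed word α, pathwidth(G_α) ≤ 2·loc(α), where G_α is the graph on vertex set {1,...,|α|} whose edges connect consecutive positions i and i+1, and additionally connect every pair of positions carrying the same letter. -/
noncomputable section

attribute [local instance] Classical.propDecidable

variable {X : Type*} [DecidableEq X]

/-- `B 0, B 1, ..., B m` is a path decomposition of the graph `G`: every edge is
covered by some bag, and the bags containing any fixed vertex form a nonempty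
contiguous interval of indices. -/
def IsPathDecomp {W : Type*} (G : SimpleGraph W) (m : ℕ) (B : ℕ → Finset W) : Prop :=
  (∀ u v, G.Adj u v → ∃ t ≤ m, u ∈ B t ∧ v ∈ B t) ∧
  (∀ v : W, ∃ i j, i ≤ j ∧ j ≤ m ∧ ∀ t, v ∈ B t ↔ (i ≤ t ∧ t ≤ j))

/-- The pathwidth of a graph: the minimum, over path decompositions, of the
maximum bag size minus one. -/
def pathwidth {W : Type*} (G : SimpleGraph W) : ℕ :=
  sInf {w | ∃ m B, IsPathDecomp G m B ∧ ∀ t, (B t).card ≤ w + 1}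

/-- The graph `G_α` of the word `α`: vertices are the positions of `α`, and edges
connect consecutive positions as well as every pair of distinct positions carrying
the same letter. -/
def wordGraph (α : List X) : SimpleGraph (Fin α.length) :=
  SimpleGraph.fromRel (fun i j => ((i : ℕ) + 1 = (j : ℕ)) ∨ α.get i = α.get j)

/-!
Fix a marking sequence `σ` realising `loc α` and sweep the positions of `α` in the order
`orderKey`: by marking stage and, within a stage, the occurrences next to an already marked
position first. Sweeping in any injective order gives a path decomposition whose bag at `v` is `v`
together with the separator at `v`: the positions swept before `v` that have a neighbour not swept
before `v`. If `v` is marked at stage `j`, a separator vertex is either an end of a block of the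
positions marked before stage `j`, or is marked at stage `j` and then lies next to such a block
or at the end of a block of the positions marked up to stage `j`. Charging injectively to block
starts before stage `j` and to block ends before stage `j` (if `v` is next to an earlier-marked
position) or up to stage `j` (otherwise) bounds the separator by `2 · loc α`; the order within a
stage is what makes the charging injective.
-/

open Finset

namespace SimpleGraph

variable {V : Type*} [Fintype V] (G : SimpleGraph V)

/-- Maximized over `v`, its size is the vertex separation number of the order `ρ`. -/
def separatorAt {L : Type*} [LinearOrder L] (ρ : V → L) (v : V) : Finset V :=
  {u | ρ u < ρ v ∧ ∃ w, ρ v ≤ ρ w ∧ G.Adj u w}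

def sweepBag (r : V → ℕ) (t : ℕ) : Finset V :=
  {u | r u ≤ t ∧ (r u = t ∨ ∃ w, t ≤ r w ∧ G.Adj u w)}

variable {G}

@[simp]
theorem mem_separatorAt {L : Type*} [LinearOrder L] {ρ : V → L} {v u : V} :
    u ∈ G.separatorAt ρ v ↔ ρ u < ρ v ∧ ∃ w, ρ v ≤ ρ w ∧ G.Adj u w := by
  simp [separatorAt]

@[simp]
theorem mem_sweepBag {r : V → ℕ} {t : ℕ} {u : V} :
    u ∈ G.sweepBag r t ↔ r u ≤ t ∧ (r u = t ∨ ∃ w, t ≤ r w ∧ G.Adj u w) := by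
  simp [sweepBag]

variable (G)

theorem isPathDecomp_sweepBag (r : V → ℕ) : IsPathDecomp G (univ.sup r) (G.sweepBag r) := by
  refine ⟨fun u w huw => ?_, fun v => ?_⟩
  · rcases le_total (r u) (r w) with h | h
    · exact ⟨r w, le_sup (mem_univ w), mem_sweepBag.2 ⟨h, Or.inr ⟨w, le_rfl, huw⟩⟩,
        mem_sweepBag.2 ⟨le_rfl, Or.inl rfl⟩⟩
    · exact ⟨r u, le_sup (mem_univ u), mem_sweepBag.2 ⟨le_rfl, Or.inl rfl⟩,
        mem_sweepBag.2 ⟨h, Or.inr ⟨u, le_rfl, huw.symm⟩⟩⟩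
  · set last := max (r v) (({w | G.Adj v w} : Finset V).sup r)
    refine ⟨r v, last, le_max_left _ _, max_le (le_sup (mem_univ v)) (sup_mono (subset_univ _)),
      fun t => mem_sweepBag.trans ⟨?_, ?_⟩⟩
    · rintro ⟨hvt, rfl | ⟨w, htw, hvw⟩⟩
      · exact ⟨le_rfl, le_max_left _ _⟩
      · exact ⟨hvt, htw.trans ((le_sup (by simpa using hvw)).trans (le_max_right _ _))⟩
    · rintro ⟨hvt, htl⟩
      refine ⟨hvt, hvt.eq_or_lt.imp id fun hlt => ?_⟩
      obtain ⟨w, hw, htw⟩ := (Finset.le_sup_iff (bot_le.trans_lt hlt)).1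
        ((le_max_iff.1 htl).resolve_left (by omega))
      exact ⟨w, htw, by simpa using hw⟩

theorem card_sweepBag_le {r : V → ℕ} (hr : Function.Injective r) {k : ℕ}
    (h : ∀ v, #(G.separatorAt r v) ≤ k) (t : ℕ) : #(G.sweepBag r t) ≤ k + 1 := by
  set cut : Finset V := {u | r u < t ∧ ∃ w, t ≤ r w ∧ G.Adj u w}
  have hcut : #cut ≤ k := by
    by_cases hex : ∃ v, t ≤ r v
    · -- the cut at `t` is the cut just before the first vertex of rank at least `t`
      obtain ⟨v, hv, hmin⟩ := exists_min_image ({v | t ≤ r v} : Finset V) r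
        (by simpa [Finset.Nonempty] using hex)
      simp only [mem_filter, mem_univ, true_and] at hv hmin
      refine (card_le_card fun u hu => ?_).trans (h v)
      obtain ⟨hut, w, htw, huw⟩ := (mem_filter.1 hu).2
      refine mem_separatorAt.2 ⟨lt_of_not_ge fun hvu => ?_, w, hmin w htw, huw⟩
      exact absurd (hmin u (hv.trans hvu)) (by omega)
    · have hnone : ∀ w, ¬ t ≤ r w := by simpa using hex
      simp [cut, hnone]
  have hsame : #({u | r u = t} : Finset V) ≤ 1 :=
    card_le_one.2 fun a ha b hb => hr (by simp only [mem_filter] at ha hb; omega)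
  calc #(G.sweepBag r t)
      ≤ #(cut ∪ ({u | r u = t} : Finset V)) := by
        refine card_le_card fun u hu => ?_
        obtain ⟨hut, hu⟩ := mem_sweepBag.1 hu
        simp only [cut, mem_union, mem_filter, mem_univ, true_and]
        by_cases heq : r u = t
        · exact Or.inr heq
        · exact Or.inl ⟨lt_of_le_of_ne hut heq, hu.resolve_left heq⟩
    _ ≤ k + 1 := (card_union_le _ _).trans (by omega)

theorem pathwidth_le_of_card_separatorAt_le {L : Type*} [LinearOrder L] {ρ : V → L}
    (hρ : Function.Injective ρ) {k : ℕ} (h : ∀ v, #(G.separatorAt ρ v) ≤ k) :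
    pathwidth G ≤ k := by
  set r : V → ℕ := fun v => #({u | ρ u < ρ v} : Finset V)
  have hlt : ∀ u v, r u < r v ↔ ρ u < ρ v := by
    refine fun u v => ⟨fun huv => lt_of_not_ge fun hvu => huv.not_ge ?_, fun huv => ?_⟩
    · exact card_le_card fun x hx => by
        simp only [mem_filter] at hx ⊢
        exact ⟨hx.1, hx.2.trans_le hvu⟩
    · refine card_lt_card ⟨fun x hx => ?_, fun hsub => ?_⟩
      · simp only [mem_filter] at hx ⊢
        exact ⟨hx.1, hx.2.trans huv⟩
      · simpa using hsub (mem_filter.2 ⟨mem_univ u, huv⟩)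
  have hle : ∀ u v, r u ≤ r v ↔ ρ u ≤ ρ v := by simp only [← not_lt, hlt, implies_true]
  have hr : Function.Injective r := fun u v huv =>
    hρ (le_antisymm ((hle u v).1 huv.le) ((hle v u).1 huv.ge))
  have hsep : ∀ v, G.separatorAt r v = G.separatorAt ρ v := fun v => by
    ext u; simp only [mem_separatorAt, hlt, hle]
  exact Nat.sInf_le ⟨_, _, G.isPathDecomp_sweepBag r,
    G.card_sweepBag_le hr fun v => (hsep v).symm ▸ h v⟩

end SimpleGraph

def runStarts (p : ℕ → Prop) (n : ℕ) : Finset ℕ := {i ∈ range n | p i ∧ (i = 0 ∨ ¬ p (i - 1))}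

def runEnds (p : ℕ → Prop) (n : ℕ) : Finset ℕ := {i ∈ range n | p i ∧ ¬ p (i + 1)}

theorem card_runStarts_eq (p : ℕ → Prop) (n : ℕ) :
    #(runStarts p n) = #(runEnds p n) + if 0 < n ∧ p (n - 1) ∧ p n then 1 else 0 := by
  induction n with
  | zero => simp [runStarts, runEnds]
  | succ n ih =>
    simp only [runStarts, runEnds, range_add_one, filter_insert, Nat.add_sub_cancel] at ih ⊢
    split_ifs at ih ⊢ <;> simp_all

theorem card_runEnds_le_card_runStarts (p : ℕ → Prop) (n : ℕ) :
    #(runEnds p n) ≤ #(runStarts p n) := by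
  rw [card_runStarts_eq]; omega

theorem blocksAux_eq_card (prev : Bool) (bs : List Bool) :
    blocksAux prev bs = #{i ∈ range bs.length |
      (prev :: bs).getD (i + 1) false = true ∧ (prev :: bs).getD i false = false} := by
  induction bs generalizing prev with
  | nil => simp [blocksAux]
  | cons b bs ih =>
    rw [blocksAux, ih, List.length_cons, card_filter, card_filter, sum_range_succ']
    simp [add_comm (ite _ _ _)]

theorem blockCount_eq_card_runStarts (w S : List X) :
    blockCount w S = #(runStarts (fun i => ∃ h : i < w.length, w[i] ∈ S) w.length) := by
  rw [blockCount, blocksAux_eq_card, List.length_map]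
  congr 1
  ext i
  simp only [runStarts, mem_filter, mem_range]
  rcases i with _ | i
  · cases w <;> simp
  · by_cases hi : i + 1 < w.length
    · simp [hi, Nat.lt_of_succ_lt hi]
    · simp [hi]

/-- Position `i` of `α` is marked once the first `c` letters of `σ` are exactly when
`markTime α σ i < c`; positions past the end of `α` are never marked. -/
def markTime (α σ : List X) (i : ℕ) : ℕ :=
  if h : i < α.length then σ.idxOf α[i] else σ.length

section Marking

variable {α σ : List X} {i : ℕ}

theorem markTime_le_length : markTime α σ i ≤ σ.length := by
  unfold markTime; split_ifs <;> simp [List.idxOf_le_length]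

theorem lt_length_of_markTime_lt (h : markTime α σ i < σ.length) : i < α.length := by
  by_contra hi; simp [markTime, hi] at h

theorem markTime_lt_length (hασ : α ⊆ σ) (hi : i < α.length) : markTime α σ i < σ.length := by
  simpa [markTime, hi] using List.idxOf_lt_length_of_mem (hασ (List.getElem_mem hi))

theorem markTime_lt_iff (hασ : α ⊆ σ) {c : ℕ} (hc : c ≤ σ.length) :
    markTime α σ i < c ↔ ∃ h : i < α.length, α[i] ∈ σ.take c := by
  by_cases hi : i < α.length
  · simp [markTime, hi, List.mem_take_iff_idxOf_lt (hασ (List.getElem_mem hi))]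
  · simp [markTime, hi, hc]

theorem card_runStarts_markTime_le (hασ : α ⊆ σ) {c : ℕ} (hc : c ≤ σ.length) :
    #(runStarts (markTime α σ · < c) α.length) ≤ markingNumber α σ := by
  have hstage : blockCount α (σ.take c) ≤ markingNumber α σ :=
    le_sup (f := fun i => blockCount α (σ.take i)) (mem_range.2 (by omega))
  rwa [blockCount_eq_card_runStarts, ← funext fun i => propext (markTime_lt_iff hασ hc)] at hstage

theorem markTime_add_one_ne (hασ : α ⊆ σ) (hα : α.IsChain (· ≠ ·)) (hi : i < α.length) :
    markTime α σ (i + 1) ≠ markTime α σ i := by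
  by_cases hi' : i + 1 < α.length
  · simp only [markTime, hi, hi', dite_true]
    rw [Ne, List.idxOf_inj (hασ (List.getElem_mem hi'))]
    exact (hα.getElem i hi').symm
  · simpa [markTime, hi'] using (markTime_lt_length hασ hi).ne'

theorem markTime_eq_of_get_eq {u w : Fin α.length} (h : α.get u = α.get w) :
    markTime α σ u = markTime α σ w := by
  simpa [markTime] using congrArg σ.idxOf h

end Marking

/-- At `i = 0` the first disjunct fails, as `0 - 1 = 0`. -/
def TouchesEarlier (α σ : List X) (i : ℕ) : Prop :=
  markTime α σ (i - 1) < markTime α σ i ∨ markTime α σ (i + 1) < markTime α σ i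

/-- Positions are swept by marking time and, within a stage, those next to an earlier-marked
position first. -/
def orderKey (α σ : List X) (i : ℕ) : ℕ ×ₗ Bool ×ₗ ℕ :=
  toLex (markTime α σ i, toLex (decide ¬ TouchesEarlier α σ i, i))

/-- A separator vertex `i` at `v` marked before `v`'s stage is charged to its own run start if its
left neighbour is not yet swept; one marked at `v`'s stage is charged to the run start `i + 1` if
`i + 1` is marked earlier. All other separator vertices are charged to run ends by
`runEndCharge`. -/
def ChargedToStart (α σ : List X) (v i : ℕ) : Prop :=
  if markTime α σ i < markTime α σ v then orderKey α σ v ≤ orderKey α σ (i - 1)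
  else markTime α σ (i + 1) < markTime α σ v

def runEndCharge (α σ : List X) (v i : ℕ) : ℕ :=
  if markTime α σ i < markTime α σ v then i else if TouchesEarlier α σ v then i - 1 else i

section Separator

variable {α σ : List X}

local notation "τ" => markTime α σ
local notation "key" => orderKey α σ

theorem orderKey_lt_orderKey_iff {i k : ℕ} : key i < key k ↔ τ i < τ k ∨ τ i = τ k ∧
    (TouchesEarlier α σ i ∧ ¬ TouchesEarlier α σ k ∨
      (TouchesEarlier α σ i ↔ TouchesEarlier α σ k) ∧ i < k) := by
  simp only [orderKey, Prod.Lex.toLex_lt_toLex]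
  by_cases hi : TouchesEarlier α σ i <;> by_cases hk : TouchesEarlier α σ k <;> simp [hi, hk]

theorem markTime_le_of_orderKey_lt {i k : ℕ} (h : key i < key k) : τ i ≤ τ k := by
  rw [orderKey_lt_orderKey_iff] at h; omega

theorem orderKey_lt_of_markTime_lt {i k : ℕ} (h : τ i < τ k) : key i < key k :=
  orderKey_lt_orderKey_iff.2 (Or.inl h)

theorem orderKey_injective : Function.Injective (orderKey α σ) := fun i k h => by
  simpa [orderKey] using congrArg (fun x => (ofLex (ofLex x).2).2) h

variable (v : Fin α.length)

theorem orderKey_of_mem_separatorAt {u : Fin α.length}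
    (hu : u ∈ (wordGraph α).separatorAt (fun u => key u) v) :
    key u < key v ∧ (τ u < τ v → key v ≤ key (u - 1) ∨ key v ≤ key (u + 1)) := by
  obtain ⟨huv, w, hvw, huw⟩ := SimpleGraph.mem_separatorAt.1 hu
  refine ⟨huv, fun hτ => ?_⟩
  rw [wordGraph, SimpleGraph.fromRel_adj] at huw
  obtain ⟨-, (hsucc | hsame) | (hpred | hsame)⟩ := huw
  · exact Or.inr (hsucc ▸ hvw)
  · exact absurd hvw (not_le.2 (orderKey_lt_of_markTime_lt (markTime_eq_of_get_eq hsame ▸ hτ)))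
  · exact Or.inl (by rwa [← hpred, Nat.add_sub_cancel])
  · exact absurd hvw
      (not_le.2 (orderKey_lt_of_markTime_lt (markTime_eq_of_get_eq hsame.symm ▸ hτ)))

theorem card_filter_chargedToStart_le :
    #(((wordGraph α).separatorAt (fun u => key u) v).filter
      fun u : Fin α.length => ChargedToStart α σ v u) ≤
      #(runStarts (τ · < τ v) α.length) := by
  refine card_le_card_of_injOn (fun u => if τ u < τ v then (u : ℕ) else u + 1) ?_ ?_
  · intro u hu
    obtain ⟨-, hch⟩ := mem_filter.1 hu
    rw [ChargedToStart] at hch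
    simp only [runStarts, mem_coe, mem_filter, mem_range]
    split_ifs at hch ⊢ with hτ
    · exact ⟨u.isLt, hτ, Or.inr fun hprev => hch.not_gt (orderKey_lt_of_markTime_lt hprev)⟩
    · exact ⟨lt_length_of_markTime_lt (hch.trans_le markTime_le_length), hch,
        Or.inr (by simpa using hτ)⟩
  · intro u₁ hu₁ u₂ hu₂ heq
    obtain ⟨hsep₁, hch₁⟩ := mem_filter.1 hu₁
    obtain ⟨hsep₂, hch₂⟩ := mem_filter.1 hu₂
    have hkey₁ := (orderKey_of_mem_separatorAt v hsep₁).1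
    have hkey₂ := (orderKey_of_mem_separatorAt v hsep₂).1
    rw [ChargedToStart] at hch₁ hch₂
    simp only at heq
    split_ifs at heq hch₁ hch₂ with h₁ h₂
    · exact Fin.ext heq
    · rw [heq, Nat.add_sub_cancel] at hch₁
      exact absurd hch₁ (not_le.2 hkey₂)
    · rw [← heq, Nat.add_sub_cancel] at hch₂
      exact absurd hch₂ (not_le.2 hkey₁)
    · exact Fin.ext (by omega)

theorem of_mem_separatorAt_of_not_chargedToStart {u : Fin α.length}
    (hu : u ∈ (wordGraph α).separatorAt (fun u => key u) v) (hch : ¬ ChargedToStart α σ v u) :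
    τ u < τ v ∧ key v ≤ key (u + 1) ∨ τ u = τ v ∧ τ v ≤ τ (u + 1) ∧
      (TouchesEarlier α σ v → 0 < (u : ℕ) ∧ τ (u - 1) < τ v) := by
  obtain ⟨hkey, hnbr⟩ := orderKey_of_mem_separatorAt v hu
  rw [ChargedToStart] at hch
  split_ifs at hch with hτ
  · exact Or.inl ⟨hτ, (hnbr hτ).resolve_left hch⟩
  have hτu : τ u = τ v := le_antisymm (markTime_le_of_orderKey_lt hkey) (not_lt.1 hτ)
  refine Or.inr ⟨hτu, not_lt.1 hch, fun hv => ?_⟩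
  have hu : TouchesEarlier α σ u := by
    rcases orderKey_lt_orderKey_iff.1 hkey with h | ⟨-, ⟨hu, -⟩ | ⟨hiff, -⟩⟩
    · omega
    · exact hu
    · exact hiff.2 hv
  rcases hu with h | h
  · refine ⟨Nat.pos_of_ne_zero fun h0 => ?_, by omega⟩
    simp [h0] at h
  · omega

theorem runEndCharge_mem_runEnds (hασ : α ⊆ σ) (hα : α.IsChain (· ≠ ·)) {u : Fin α.length}
    (hu : u ∈ (wordGraph α).separatorAt (fun u => key u) v) (hch : ¬ ChargedToStart α σ v u) :
    runEndCharge α σ v u ∈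
      runEnds (τ · < if TouchesEarlier α σ v then τ v else τ v + 1) α.length := by
  simp only [runEndCharge, runEnds, mem_filter, mem_range]
  rcases of_mem_separatorAt_of_not_chargedToStart v hu hch with
    ⟨hτ, hnext⟩ | ⟨hτ, hnext, hprev⟩
  · have hge : τ v ≤ τ (u + 1) := not_lt.1 fun h => hnext.not_gt (orderKey_lt_of_markTime_lt h)
    rw [if_pos hτ]
    refine ⟨u.isLt, by split_ifs <;> omega, ?_⟩
    split_ifs with hv
    · omega
    · intro hlt
      have heq : τ (u + 1) = τ v := by omega
      have htouch : TouchesEarlier α σ (u + 1) := Or.inl (by rw [Nat.add_sub_cancel]; omega)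
      exact hnext.not_gt (orderKey_lt_orderKey_iff.2 (Or.inr ⟨heq, Or.inl ⟨htouch, hv⟩⟩))
  · rw [if_neg (by omega)]
    split_ifs with hv
    · obtain ⟨hpos, hlt⟩ := hprev hv
      exact ⟨by omega, hlt, by rw [Nat.sub_add_cancel hpos]; omega⟩
    · have := markTime_add_one_ne hασ hα u.isLt
      exact ⟨u.isLt, by omega, by omega⟩

theorem runEndCharge_injOn :
    Set.InjOn (fun u : Fin α.length => runEndCharge α σ v u)
      (((wordGraph α).separatorAt (fun u => key u) v).filter
        fun u : Fin α.length => ¬ ChargedToStart α σ v u) := by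
  intro u₁ hu₁ u₂ hu₂ heq
  obtain ⟨hsep₁, hch₁⟩ := mem_filter.1 hu₁
  obtain ⟨hsep₂, hch₂⟩ := mem_filter.1 hu₂
  have hkey₁ := (orderKey_of_mem_separatorAt v hsep₁).1
  have hkey₂ := (orderKey_of_mem_separatorAt v hsep₂).1
  simp only [runEndCharge] at heq
  apply Fin.ext
  rcases of_mem_separatorAt_of_not_chargedToStart v hsep₁ hch₁ with
    ⟨hτ₁, hnext₁⟩ | ⟨hτ₁, -, hprev₁⟩ <;>
  rcases of_mem_separatorAt_of_not_chargedToStart v hsep₂ hch₂ with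
    ⟨hτ₂, hnext₂⟩ | ⟨hτ₂, -, hprev₂⟩
  · simpa [hτ₁, hτ₂] using heq
  · rw [if_pos hτ₁, if_neg (by omega)] at heq
    split_ifs at heq with hv
    · have hsucc : (u₁ : ℕ) + 1 = u₂ := by have := (hprev₂ hv).1; omega
      exact absurd (hsucc ▸ hnext₁) (not_le.2 hkey₂)
    · omega
  · rw [if_neg (by omega), if_pos hτ₂] at heq
    split_ifs at heq with hv
    · have hsucc : (u₂ : ℕ) + 1 = u₁ := by have := (hprev₁ hv).1; omega
      exact absurd (hsucc ▸ hnext₂) (not_le.2 hkey₁)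
    · omega
  · rw [if_neg (show ¬ τ u₁ < τ v by omega), if_neg (show ¬ τ u₂ < τ v by omega)] at heq
    split_ifs at heq with hv
    · have := (hprev₁ hv).1; have := (hprev₂ hv).1; omega
    · exact heq

theorem card_filter_not_chargedToStart_le (hασ : α ⊆ σ) (hα : α.IsChain (· ≠ ·)) :
    #(((wordGraph α).separatorAt (fun u => key u) v).filter
      fun u : Fin α.length => ¬ ChargedToStart α σ v u) ≤
      #(runEnds (τ · < if TouchesEarlier α σ v then τ v else τ v + 1) α.length) :=
  card_le_card_of_injOn _
    (fun _ hu => runEndCharge_mem_runEnds v hασ hα (mem_filter.1 hu).1 (mem_filter.1 hu).2)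
    (runEndCharge_injOn v)

theorem card_separatorAt_wordGraph_le (hασ : α ⊆ σ) (hα : α.IsChain (· ≠ ·)) :
    #((wordGraph α).separatorAt (fun u => key u) v) ≤ 2 * markingNumber α σ := by
  rw [← card_filter_add_card_filter_not fun u : Fin α.length => ChargedToStart α σ v u]
  have hv := markTime_lt_length hασ v.isLt
  have hstarts := (card_filter_chargedToStart_le v).trans (card_runStarts_markTime_le hασ hv.le)
  have hends := (card_filter_not_chargedToStart_le v hασ hα).trans <|
    (card_runEnds_le_card_runStarts _ _).trans
      (card_runStarts_markTime_le hασ (by split_ifs <;> omega))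
  omega

end Separator

/-- For every condensed word `α`, `pathwidth(G_α) ≤ 2 · loc(α)`. -/
theorem pathwidth_le_two_mul_locality (α : List X) (hcond : α.Chain' (· ≠ ·)) :
    pathwidth (wordGraph α) ≤ 2 * locality α := by
  obtain ⟨σ, hσ, hloc⟩ : locality α ∈ {n | ∃ σ, IsMarkingSeq α σ ∧ markingNumber α σ = n} :=
    Nat.sInf_mem ⟨_, α.dedup, ⟨α.nodup_dedup, by ext; simp⟩, rfl⟩
  have hασ : α ⊆ σ := fun x hx => by simpa [← List.mem_toFinset, hσ.2] using hx
  rw [← hloc]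
  exact (wordGraph α).pathwidth_le_of_card_separatorAt_le
    (orderKey_injective.comp Fin.val_injective) fun v => card_separatorAt_wordGraph_le v hασ hcond
end
end
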